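/- Let (x₁,x₂,x₃) be a triple of real numbers with |xᵢ| < 2 for i = 1,2,3 and x₁² + x₂² + x₃² − x₁x₂x₃ < 4. Then for every element β of the group generated by β₁ and β₂, all three coordinates of β(x₁,x₂,x₃) have absolute value strictly less than 2 (and β(x₁,x₂,x₃) again satisfies the same inequality x'₁² + x'₂² + x'₃² − x'₁x'₂x'₃ < 4). -/

import Mathlib

/-- The braid-group generator `β₁`, as a bijection of `ℝ³`. -/
def braidEquiv₁ : Equiv.Perm (ℝ × ℝ × ℝ) where
  toFun p := (-p.1, p.2.2 - p.1 * p.2.1, p.2.1)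
  invFun p := (-p.1, p.2.2, p.2.1 - p.1 * p.2.2)
  left_inv := by rintro ⟨a, b, c⟩; simp only [Prod.mk.injEq]; exact ⟨by first | ring | trivial, by first | ring | trivial, by first | ring | trivial⟩
  right_inv := by rintro ⟨a, b, c⟩; simp only [Prod.mk.injEq]; exact ⟨by first | ring | trivial, by first | ring | trivial, by first | ring | trivial⟩

/-- The braid-group generator `β₂`, as a bijection of `ℝ³`. -/
def braidEquiv₂ : Equiv.Perm (ℝ × ℝ × ℝ) where
  toFun p := (p.2.2, -p.2.1, p.1 - p.2.1 * p.2.2)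
  invFun p := (p.2.2 - p.1 * p.2.1, -p.2.1, p.1)
  left_inv := by rintro ⟨a, b, c⟩; simp only [Prod.mk.injEq]; exact ⟨by first | ring | trivial, by first | ring | trivial, by first | ring | trivial⟩
  right_inv := by rintro ⟨a, b, c⟩; simp only [Prod.mk.injEq]; exact ⟨by first | ring | trivial, by first | ring | trivial, by first | ring | trivial⟩

/-- The braid group: the group of bijections of `ℝ³` generated by `β₁` and `β₂`. -/
def braidSubgroup : Subgroup (Equiv.Perm (ℝ × ℝ × ℝ)) :=
  Subgroup.closure {braidEquiv₁, braidEquiv₂}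

/-- A triple is admissible if at most one of its coordinates equals zero. -/
def Admissible (p : ℝ × ℝ × ℝ) : Prop :=
  ¬(p.1 = 0 ∧ p.2.1 = 0) ∧ ¬(p.1 = 0 ∧ p.2.2 = 0) ∧ ¬(p.2.1 = 0 ∧ p.2.2 = 0)

/-- An admissible triple is good if every braid image of it has all coordinates of the
form `-2 cos (π r)` with `r ∈ [0,1]` rational. -/
def Good (p : ℝ × ℝ × ℝ) : Prop :=
  Admissible p ∧ ∀ g ∈ braidSubgroup, ∃ r₁ r₂ r₃ : ℚ,
    0 ≤ r₁ ∧ r₁ ≤ 1 ∧ 0 ≤ r₂ ∧ r₂ ≤ 1 ∧ 0 ≤ r₃ ∧ r₃ ≤ 1 ∧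
    g p = (-2 * Real.cos (Real.pi * r₁), -2 * Real.cos (Real.pi * r₂),
           -2 * Real.cos (Real.pi * r₃))

/-- Two triples are equivalent when one is obtained from the other by changing the signs
of exactly two of the three coordinates (or by changing no signs). -/
def TripleEquiv (p q : ℝ × ℝ × ℝ) : Prop :=
  q = p ∨ q = (p.1, -p.2.1, -p.2.2) ∨ q = (-p.1, p.2.1, -p.2.2) ∨ q = (-p.1, -p.2.1, p.2.2)

/-!
Both generators preserve the Fricke polynomial `κ(a, b, c) = a² + b² + c² - abc`, and each of them
and of their inverses keeps two coordinates up to sign and replaces the third. The new coordinate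
stays in `(-2, 2)` because of the identity `4 (κ(a, b, c) - 4) = (2c - ab)² - (4 - a²)(4 - b²)`:
if `|a|, |b| < 2` and `κ < 4`, then `(2c - ab)² < (4 - a²)(4 - b²) ≤ (4 ∓ ab)²`,
so `-4 - ab < 2c - ab < 4 - ab`.
-/

open Set

def fricke (a b c : ℝ) : ℝ := a ^ 2 + b ^ 2 + c ^ 2 - a * b * c

lemma fricke_swap (a b c : ℝ) : fricke a c b = fricke a b c := by
  unfold fricke; ring

lemma abs_lt_two_of_fricke_lt_four {a b c : ℝ} (ha : |a| < 2) (hb : |b| < 2)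
    (h : fricke a b c < 4) : |c| < 2 := by
  have hdisc : (2 * c - a * b) ^ 2 < (4 - a ^ 2) * (4 - b ^ 2) := by
    unfold fricke at h; linear_combination 4 * h
  have hab : |a * b| < 4 := by
    rw [abs_mul]; nlinarith [abs_nonneg a, abs_nonneg b]
  obtain ⟨hab₁, hab₂⟩ := abs_lt.mp hab
  have hupper : (4 - a ^ 2) * (4 - b ^ 2) ≤ (4 - a * b) ^ 2 := by
    linear_combination 4 * sq_nonneg (a - b)
  have hlower : (4 - a ^ 2) * (4 - b ^ 2) ≤ (4 + a * b) ^ 2 := by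
    linear_combination 4 * sq_nonneg (a + b)
  have hlt : 2 * c - a * b < 4 - a * b :=
    (abs_lt_of_sq_lt_sq' (hdisc.trans_le hupper) (by linarith)).2
  have hgt : -(4 + a * b) < 2 * c - a * b :=
    (abs_lt_of_sq_lt_sq' (hdisc.trans_le hlower) (by linarith)).1
  exact abs_lt.mpr ⟨by linarith, by linarith⟩

def boundedTriples : Set (ℝ × ℝ × ℝ) :=
  {p | (|p.1| < 2 ∧ |p.2.1| < 2 ∧ |p.2.2| < 2) ∧ fricke p.1 p.2.1 p.2.2 < 4}

lemma mapsTo_of_mem_closure {α : Type*} {s : Set α} {T : Set (Equiv.Perm α)}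
    (hT : ∀ g ∈ T, MapsTo g s s ∧ MapsTo ⇑g⁻¹ s s) {g : Equiv.Perm α}
    (hg : g ∈ Subgroup.closure T) : MapsTo g s s := by
  induction hg using Subgroup.closure_induction'' with
  | mem g hg => exact (hT g hg).1
  | inv_mem g hg => exact (hT g hg).2
  | one => exact mapsTo_id s
  | mul g h _ _ hg hh => rw [Equiv.Perm.coe_mul]; exact hg.comp hh

lemma mapsTo_braidEquiv₁ : MapsTo braidEquiv₁ boundedTriples boundedTriples := by
  rintro ⟨a, b, c⟩ ⟨⟨ha, hb, -⟩, h⟩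
  have hκ : fricke (-a) (c - a * b) b = fricke a b c := by unfold fricke; ring
  have ha' : |-a| < 2 := by rwa [abs_neg]
  have hnew : |c - a * b| < 2 :=
    abs_lt_two_of_fricke_lt_four ha' hb (by rw [fricke_swap, hκ]; exact h)
  exact ⟨⟨ha', hnew, hb⟩, hκ ▸ h⟩

lemma mapsTo_braidEquiv₁_inv : MapsTo ⇑braidEquiv₁⁻¹ boundedTriples boundedTriples := by
  rintro ⟨a, b, c⟩ ⟨⟨ha, -, hc⟩, h⟩
  have hκ : fricke (-a) c (b - a * c) = fricke a b c := by unfold fricke; ring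
  have ha' : |-a| < 2 := by rwa [abs_neg]
  have hnew : |b - a * c| < 2 := abs_lt_two_of_fricke_lt_four ha' hc (by rw [hκ]; exact h)
  exact ⟨⟨ha', hc, hnew⟩, hκ ▸ h⟩

lemma mapsTo_braidEquiv₂ : MapsTo braidEquiv₂ boundedTriples boundedTriples := by
  rintro ⟨a, b, c⟩ ⟨⟨-, hb, hc⟩, h⟩
  have hκ : fricke c (-b) (a - b * c) = fricke a b c := by unfold fricke; ring
  have hb' : |-b| < 2 := by rwa [abs_neg]
  have hnew : |a - b * c| < 2 := abs_lt_two_of_fricke_lt_four hc hb' (by rw [hκ]; exact h)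
  exact ⟨⟨hc, hb', hnew⟩, hκ ▸ h⟩

lemma mapsTo_braidEquiv₂_inv : MapsTo ⇑braidEquiv₂⁻¹ boundedTriples boundedTriples := by
  rintro ⟨a, b, c⟩ ⟨⟨ha, hb, -⟩, h⟩
  have hκ : fricke (c - a * b) (-b) a = fricke a b c := by unfold fricke; ring
  have hb' : |-b| < 2 := by rwa [abs_neg]
  have hκ' : fricke a (-b) (c - a * b) = fricke a b c := by unfold fricke; ring
  have hnew : |c - a * b| < 2 := abs_lt_two_of_fricke_lt_four ha hb' (by rw [hκ']; exact h)
  exact ⟨⟨hnew, hb', ha⟩, hκ ▸ h⟩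

lemma mapsTo_boundedTriples {g : Equiv.Perm (ℝ × ℝ × ℝ)} (hg : g ∈ braidSubgroup) :
    MapsTo g boundedTriples boundedTriples := by
  refine mapsTo_of_mem_closure (fun g hg ↦ ?_) hg
  rcases hg with rfl | rfl
  · exact ⟨mapsTo_braidEquiv₁, mapsTo_braidEquiv₁_inv⟩
  · exact ⟨mapsTo_braidEquiv₂, mapsTo_braidEquiv₂_inv⟩

/-- The set of triples with all `|xᵢ| < 2` and
`x₁² + x₂² + x₃² - x₁x₂x₃ < 4` is invariant under the braid group. -/
theorem braid_preserves_bounded_triples (p : ℝ × ℝ × ℝ)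
    (hb1 : |p.1| < 2) (hb2 : |p.2.1| < 2) (hb3 : |p.2.2| < 2)
    (hlt : p.1 ^ 2 + p.2.1 ^ 2 + p.2.2 ^ 2 - p.1 * p.2.1 * p.2.2 < 4) :
    ∀ g ∈ braidSubgroup,
      (|(g p).1| < 2 ∧ |(g p).2.1| < 2 ∧ |(g p).2.2| < 2) ∧
      (g p).1 ^ 2 + (g p).2.1 ^ 2 + (g p).2.2 ^ 2 -
        (g p).1 * (g p).2.1 * (g p).2.2 < 4 := by
  exact fun g hg ↦ mapsTo_boundedTriples hg ⟨⟨hb1, hb2, hb3⟩, hlt⟩
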